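/- For t ≠ 0, the multiplicity at Q = (0:0:0:1) of the form (f_t)_3 = x3*D^3 + 3t*x2*x0^4*D^2 + 3t^2*x1*x0^8*D + t^3*x0^13 equals the multiplicity of D^3 at Q, which is 6. In particular min_i mult_Q((f_t)_i) ≤ 6. -/

import Mathlib

/-!
Every summand of `(f_t)_3` other than `D^3` carries `x0^4` times a factor of order at least 5,
so `(f_t)_3 - D^3 ∈ m^9` and `(f_t)_3` has the multiplicity of `D^3`. Since `D` has order 2,
`D^3 ∈ m^6`; on the `x0`-axis `D` restricts to `x0^2`, so `D^3` restricts to `x0^6` and is not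
in `m^7`.
-/

open MvPolynomial

namespace Ideal

variable {R : Type*}

theorem mul_mem_pow_add [CommSemiring R] {I : Ideal R} {a b : ℕ} {x y : R}
    (hx : x ∈ I ^ a) (hy : y ∈ I ^ b) : x * y ∈ I ^ (a + b) :=
  pow_add I a b ▸ mul_mem_mul hx hy

theorem pow_mem_pow_mul [CommSemiring R] {I : Ideal R} {a : ℕ} {x : R}
    (hx : x ∈ I ^ a) (n : ℕ) : x ^ n ∈ I ^ (a * n) :=
  pow_mul I a n ▸ pow_mem_pow hx n

theorem mem_pow_and_notMem_pow_succ_of_sub_mem [CommRing R] {I : Ideal R} {n : ℕ} {p q : R}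
    (hq : q ∈ I ^ n) (hq' : q ∉ I ^ (n + 1)) (hpq : p - q ∈ I ^ (n + 1)) :
    p ∈ I ^ n ∧ p ∉ I ^ (n + 1) := by
  have hle : I ^ (n + 1) ≤ I ^ n := pow_le_pow_right n.le_succ
  refine ⟨sub_add_cancel p q ▸ add_mem (hle hpq) hq, fun hp => hq' ?_⟩
  simpa using sub_mem hp hpq

end Ideal

namespace MvPolynomial

variable {σ R : Type*} [CommSemiring R]

theorem X_mem_idealOfVars (i : σ) : X i ∈ idealOfVars σ R :=
  Ideal.subset_span ⟨i, rfl⟩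

noncomputable def restrictLine (v : σ → R) : MvPolynomial σ R →ₐ[R] Polynomial R :=
  aeval fun i => Polynomial.C (v i) * Polynomial.X

theorem X_pow_dvd_restrictLine_of_mem_pow_idealOfVars (v : σ → R) {n : ℕ} {p : MvPolynomial σ R}
    (hp : p ∈ idealOfVars σ R ^ n) : Polynomial.X ^ n ∣ restrictLine v p := by
  have hle : (idealOfVars σ R).map (restrictLine v) ≤ Ideal.span {Polynomial.X} := by
    rw [Ideal.map_span, Ideal.span_le]
    rintro _ ⟨_, ⟨i, rfl⟩, rfl⟩
    simp [restrictLine, Ideal.mem_span_singleton]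
  have := Ideal.pow_right_mono hle n
    (Ideal.map_pow (restrictLine v) _ n ▸ Ideal.mem_map_of_mem (restrictLine v) hp)
  rwa [Ideal.span_singleton_pow, Ideal.mem_span_singleton] at this

end MvPolynomial

section ChartAtQ

variable (R : Type*) [CommRing R]

theorem span_X_fin_three :
    (Ideal.span {X 0, X 1, X 2} : Ideal (MvPolynomial (Fin 3) R)) = idealOfVars (Fin 3) R := by
  rw [idealOfVars, Set.range]
  congr 1
  ext p
  simp [Fin.exists_fin_succ, eq_comm]

/-- `chartD` and `chartF3` are `D` and `(f_t)_3` in the affine chart `x3 = 1`. -/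
noncomputable def chartD : MvPolynomial (Fin 3) R :=
  X 0 ^ 2 - 3 * X 1 ^ 2 * X 2 ^ 2 - 6 * X 0 * X 1 * X 2 + 4 * X 0 * X 2 ^ 3 + 4 * X 1 ^ 3

theorem chartD_mem_idealOfVars_sq : chartD R ∈ idealOfVars (Fin 3) R ^ 2 := by
  have hX := X_mem_idealOfVars (σ := Fin 3) (R := R)
  have hsq : ∀ i j, (X i * X j : MvPolynomial (Fin 3) R) ∈ idealOfVars (Fin 3) R ^ 2 :=
    fun i j => sq (idealOfVars (Fin 3) R) ▸ Ideal.mul_mem_mul (hX i) (hX j)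
  have hD : chartD R = X 0 * X 0 + X 1 * X 1 * (4 * X 1 - 3 * X 2 ^ 2) +
      X 0 * X 2 * (4 * X 2 ^ 2 - 6 * X 1) := by
    rw [chartD]; ring
  rw [hD]
  exact add_mem (add_mem (hsq 0 0) (Ideal.mul_mem_right _ _ (hsq 1 1)))
    (Ideal.mul_mem_right _ _ (hsq 0 2))


theorem chartD_pow_three_notMem_idealOfVars_pow_seven [Nontrivial R] :
    chartD R ^ 3 ∉ idealOfVars (Fin 3) R ^ 7 := by
  intro h
  have hline : restrictLine ![1, 0, 0] (chartD R ^ 3) = Polynomial.X ^ 6 := by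
    simp [restrictLine, chartD, ← pow_mul]
  have := X_pow_dvd_restrictLine_of_mem_pow_idealOfVars ![1, 0, 0] h
  rw [hline, Polynomial.X_pow_dvd_iff] at this
  simpa using this 6 (by norm_num)

noncomputable def chartF3 (t : R) : MvPolynomial (Fin 3) R :=
  chartD R ^ 3 + 3 * C t * X 2 * X 0 ^ 4 * chartD R ^ 2 + 3 * C t ^ 2 * X 1 * X 0 ^ 8 * chartD R +
    C t ^ 3 * X 0 ^ 13

theorem chartF3_sub_chartD_pow_three_mem_idealOfVars_pow_seven (t : R) :
    chartF3 R t - chartD R ^ 3 ∈ idealOfVars (Fin 3) R ^ 7 := by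
  have hX (i : Fin 3) : X i ∈ idealOfVars (Fin 3) R ^ 1 := by
    rw [pow_one]; exact X_mem_idealOfVars i
  have hD := chartD_mem_idealOfVars_sq R
  have h₁ : X 2 * X 0 ^ 4 * chartD R ^ 2 ∈ idealOfVars (Fin 3) R ^ (1 + 1 * 4 + 2 * 2) :=
    Ideal.mul_mem_pow_add (Ideal.mul_mem_pow_add (hX 2) (Ideal.pow_mem_pow_mul (hX 0) 4))
      (Ideal.pow_mem_pow_mul hD 2)
  have h₂ : X 1 * X 0 ^ 8 * chartD R ∈ idealOfVars (Fin 3) R ^ (1 + 1 * 8 + 2) :=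
    Ideal.mul_mem_pow_add (Ideal.mul_mem_pow_add (hX 1) (Ideal.pow_mem_pow_mul (hX 0) 8)) hD
  have h₃ : X 0 ^ 13 ∈ idealOfVars (Fin 3) R ^ (1 * 13) := Ideal.pow_mem_pow_mul (hX 0) 13
  have hdiff : chartF3 R t - chartD R ^ 3 = 3 * C t * (X 2 * X 0 ^ 4 * chartD R ^ 2) +
      3 * C t ^ 2 * (X 1 * X 0 ^ 8 * chartD R) + C t ^ 3 * X 0 ^ 13 := by
    rw [chartF3]; ring
  rw [hdiff]
  have hle {n : ℕ} (hn : 7 ≤ n) := Ideal.pow_le_pow_right (I := idealOfVars (Fin 3) R) hn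
  exact add_mem (add_mem (Ideal.mul_mem_left _ _ (hle (by norm_num) h₁))
    (Ideal.mul_mem_left _ _ (hle (by norm_num) h₂))) (Ideal.mul_mem_left _ _ (hle (by norm_num) h₃))

theorem chartF3_mem_idealOfVars_pow_six_and_notMem_pow_seven [Nontrivial R] (t : R) :
    chartF3 R t ∈ idealOfVars (Fin 3) R ^ 6 ∧ chartF3 R t ∉ idealOfVars (Fin 3) R ^ 7 :=
  Ideal.mem_pow_and_notMem_pow_succ_of_sub_mem
    (Ideal.pow_mem_pow_mul (chartD_mem_idealOfVars_sq R) 3)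
    (chartD_pow_three_notMem_idealOfVars_pow_seven R)
    (chartF3_sub_chartD_pow_three_mem_idealOfVars_pow_seven R t)

end ChartAtQ

open MvPolynomial in
theorem multiplicity_of_f3_at_Q {k : Type*} [Field k] (t : k) :
    let Daff : MvPolynomial (Fin 3) k :=
      X 0 ^ 2 - 3 * X 1 ^ 2 * X 2 ^ 2 - 6 * X 0 * X 1 * X 2 + 4 * X 0 * X 2 ^ 3 +
        4 * X 1 ^ 3
    let m : Ideal (MvPolynomial (Fin 3) k) := Ideal.span {X 0, X 1, X 2}
    let f : Fin 4 → MvPolynomial (Fin 3) k :=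
      ![X 0 * Daff ^ 3,
        X 1 * Daff ^ 3 + C t * X 0 ^ 5 * Daff ^ 2,
        X 2 * Daff ^ 3 + 2 * C t * X 1 * X 0 ^ 4 * Daff ^ 2 + C t ^ 2 * X 0 ^ 9 * Daff,
        Daff ^ 3 + 3 * C t * X 2 * X 0 ^ 4 * Daff ^ 2 + 3 * C t ^ 2 * X 1 * X 0 ^ 8 * Daff +
          C t ^ 3 * X 0 ^ 13]
    (f 3 ∈ m ^ 6 ∧ f 3 ∉ m ^ 7) ∧ (∃ i : Fin 4, f i ∉ m ^ 7) := by
  intro Daff m f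
  have hf3 : f 3 ∈ m ^ 6 ∧ f 3 ∉ m ^ 7 := by
    rw [show m = idealOfVars (Fin 3) k from span_X_fin_three k]
    exact chartF3_mem_idealOfVars_pow_six_and_notMem_pow_seven k t
  exact ⟨hf3, 3, hf3.2⟩
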